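/- arXiv:1606.03525 — 4 statements merged into one kernel-verified Lean document; each statement's English description precedes it below -/
import Mathlib

section
/- For every a > 0 and every θ ∈ [0, 2π], the series ∑_{n=1}^∞ cos(nθ)/(n² + a²) converges and equals π·cosh((π − θ)a)/(2a·sinh(πa)) − 1/(2a²). -/
/-!
The `2π`-periodic extension of `x ↦ cosh ((π - x) a)` from `[0, 2π]` is continuous, since the
values at the two endpoints agree. Writing `cosh` as a sum of two exponentials, its `n`-th Fourier
coefficient is `a sinh (π a) / (π (n² + a²))`. These coefficients are summable, so the Fourier
series converges pointwise to the function. Taking real parts and folding the even sum over `ℤ`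
into a sum over `n ≥ 1` gives the formula.
-/

open Real

theorem HasSum.two_nsmul_nat_add_one_of_even {G : Type*} [AddCommGroup G] [TopologicalSpace G]
    [IsTopologicalAddGroup G] {f : ℤ → G} {s : G} (hf : HasSum f s) (heven : f.Even) :
    HasSum (fun n : ℕ => 2 • f (n + 1)) (s - f 0) := by
  have h := hf.nat_add_neg
  simp only [heven _, ← two_nsmul] at h
  simpa [two_nsmul, sub_add_eq_sub_sub] using
    (hasSum_nat_add_iff' (f := fun n : ℕ => 2 • f n) 1).mpr h

namespace AddCircle

variable {𝕜 B : Type*} [AddCommGroup 𝕜] [LinearOrder 𝕜] [IsOrderedAddMonoid 𝕜]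
  [Archimedean 𝕜] {p : 𝕜} [hp : Fact (0 < p)] {a : 𝕜}

theorem liftIco_coe_apply_of_mem_Icc {f : 𝕜 → B} (hf : f a = f (a + p)) {x : 𝕜}
    (hx : x ∈ Set.Icc a (a + p)) : liftIco p a f ↑x = f x := by
  rcases hx.2.eq_or_lt with rfl | hlt
  · rw [coe_add_period, liftIco_coe_apply ⟨le_rfl, lt_add_of_pos_right a hp.out⟩, hf]
  · exact liftIco_coe_apply ⟨hx.1, hlt⟩

end AddCircle

theorem fourier_coe_re_two_pi (n : ℤ) (x : ℝ) :
    (fourier n (x : AddCircle (2 * π))).re = cos (n * x) := by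
  rw [fourier_coe_apply, ← Complex.exp_ofReal_mul_I_re]
  congr 2
  push_cast
  field_simp

theorem summable_one_div_int_sq_add_sq (a : ℝ) :
    Summable fun n : ℤ => 1 / ((n : ℝ) ^ 2 + a ^ 2) := by
  refine (summable_one_div_int_pow.mpr one_lt_two).of_norm_bounded_eventually ?_
  filter_upwards [Set.Finite.compl_mem_cofinite (Set.finite_singleton (0 : ℤ))] with n hn
  have hn : (n : ℝ) ≠ 0 := by exact_mod_cast hn
  rw [Real.norm_of_nonneg (by positivity)]
  gcongr
  exact le_add_of_nonneg_right (sq_nonneg a)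

section

open Complex

theorem integral_exp_mul_sub_int_mul_I {c : ℂ} {n : ℤ} (hc : c - n * I ≠ 0) :
    ∫ x in (0 : ℝ)..2 * π, Complex.exp ((c - n * I) * x) =
      (Complex.exp (2 * π * c) - 1) / (c - n * I) := by
  rw [integral_exp_mul_complex hc, ofReal_zero, mul_zero, Complex.exp_zero]
  congr 2
  rw [show (c - n * I) * ↑(2 * π) = 2 * π * c + (-n : ℤ) * (2 * π * I) by push_cast; ring,
    Complex.exp_add, Complex.exp_int_mul_two_pi_mul_I, mul_one]

theorem fourierCoeffOn_cosh {a : ℝ} (ha : a ≠ 0) (n : ℤ) :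
    fourierCoeffOn two_pi_pos (fun x => ((Real.cosh ((π - x) * a) : ℝ) : ℂ)) n =
      ((a * Real.sinh (π * a) / (π * (n ^ 2 + a ^ 2)) : ℝ) : ℂ) := by
  -- the circle `AddCircle (2 * π - 0)` is the one `fourierCoeffOn_eq_integral` produces
  have hintegrand (x : ℝ) :
      fourier (-n) (x : AddCircle (2 * π - 0)) • ((Real.cosh ((π - x) * a) : ℝ) : ℂ) =
        (Complex.exp (π * a) * Complex.exp ((-a - n * I) * x) +
          Complex.exp (-(π * a)) * Complex.exp ((a - n * I) * x)) / 2 := by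
    rw [fourier_coe_apply, smul_eq_mul, ofReal_cosh, Complex.cosh, ← Complex.exp_add,
      ← Complex.exp_add, mul_div_assoc', mul_add, ← Complex.exp_add, ← Complex.exp_add]
    congr 3 <;> push_cast <;> field_simp <;> ring
  have hneg : -(a : ℂ) - n * I ≠ 0 := fun h => by simpa [ha] using congrArg Complex.re h
  have hpos : (a : ℂ) - n * I ≠ 0 := fun h => by simpa [ha] using congrArg Complex.re h
  have hnorm : (n : ℂ) ^ 2 + a ^ 2 ≠ 0 := by
    exact_mod_cast (by positivity : (n : ℝ) ^ 2 + a ^ 2 ≠ 0)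
  simp_rw [fourierCoeffOn_eq_integral, hintegrand]
  rw [intervalIntegral.integral_div, intervalIntegral.integral_add
    (Continuous.intervalIntegrable (by fun_prop) _ _)
    (Continuous.intervalIntegrable (by fun_prop) _ _),
    intervalIntegral.integral_const_mul, intervalIntegral.integral_const_mul,
    integral_exp_mul_sub_int_mul_I hneg, integral_exp_mul_sub_int_mul_I hpos]
  set E := Complex.exp (π * a)
  have hE : E ≠ 0 := Complex.exp_ne_zero _
  have hE_neg : Complex.exp (-(π * a)) = E⁻¹ := Complex.exp_neg _
  have hE_two_neg : Complex.exp (2 * π * -a) = E⁻¹ ^ 2 := by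
    rw [← hE_neg, ← Complex.exp_nat_mul]; ring_nf
  have hE_two : Complex.exp (2 * π * a) = E ^ 2 := by
    rw [← Complex.exp_nat_mul]; ring_nf
  have hsinh : ((Real.sinh (π * a) : ℝ) : ℂ) = (E - E⁻¹) / 2 := by
    rw [ofReal_sinh, Complex.sinh, ← hE_neg]; push_cast; rfl
  rw [hE_neg, hE_two_neg, hE_two, ofReal_div, ofReal_mul, hsinh, real_smul]
  push_cast
  field_simp
  linear_combination -2 * π * a * (E ^ 2 - 1) * n ^ 2 * I_sq

end

theorem hasSum_int_cos_mul_div_sq_add_sq {a θ : ℝ} (ha : a ≠ 0)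
    (hθ : θ ∈ Set.Icc 0 (2 * π)) :
    HasSum (fun n : ℤ => cos (n * θ) / (n ^ 2 + a ^ 2))
      (π * cosh ((π - θ) * a) / (a * sinh (π * a))) := by
  have : Fact (0 < 2 * π) := ⟨two_pi_pos⟩
  set f : ℝ → ℂ := fun x => ((cosh ((π - x) * a) : ℝ) : ℂ)
  have hf : f 0 = f (0 + 2 * π) := by
    simp only [f, zero_add, sub_zero, show π - 2 * π = -π by ring, neg_mul, cosh_neg]
  let F : C(AddCircle (2 * π), ℂ) :=
    ⟨_, AddCircle.liftIco_zero_continuous (by simpa using hf) (by fun_prop)⟩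
  have hcoeff (n : ℤ) :
      fourierCoeff F n = ((a * sinh (π * a) / (π * (n ^ 2 + a ^ 2)) : ℝ) : ℂ) := by
    rw [← fourierCoeffOn_cosh ha n]
    exact (fourierCoeff_liftIco_eq f n).trans (by congr 1; simp)
  have hsum : Summable (fourierCoeff F) := by
    refine (Complex.summable_ofReal.mpr ?_).congr fun n => (hcoeff n).symm
    refine ((summable_one_div_int_sq_add_sq a).mul_left (a * sinh (π * a) / π)).congr
      fun n => ?_
    field_simp
  have hFθ : F θ = f θ := AddCircle.liftIco_coe_apply_of_mem_Icc hf (by simpa using hθ)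
  have h := Complex.hasSum_re
    (has_pointwise_sum_fourier_series_of_summable hsum (θ : AddCircle (2 * π)))
  simp only [hFθ, hcoeff, smul_eq_mul, Complex.re_ofReal_mul, fourier_coe_re_two_pi, f,
    Complex.ofReal_re] at h
  rw [mul_div_right_comm]
  refine (h.mul_left (π / (a * sinh (π * a)))).congr_fun fun n => ?_
  field_simp

theorem stmt_2 (a θ : ℝ) (ha : 0 < a) (hθ₀ : 0 ≤ θ) (hθ₁ : θ ≤ 2 * π) :
    HasSum (fun n : ℕ => Real.cos ((n + 1 : ℕ) * θ) / (((n + 1 : ℕ) : ℝ) ^ 2 + a ^ 2))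
      (π * Real.cosh ((π - θ) * a) / (2 * a * Real.sinh (π * a)) - 1 / (2 * a ^ 2)) := by
  have h := (hasSum_int_cos_mul_div_sq_add_sq ha.ne' ⟨hθ₀, hθ₁⟩).two_nsmul_nat_add_one_of_even
    fun n => by simp [cos_neg]
  simp only [nsmul_eq_mul, Int.cast_zero, zero_mul, cos_zero, zero_pow two_ne_zero,
    zero_add] at h
  rw [show π * cosh ((π - θ) * a) / (2 * a * sinh (π * a)) - 1 / (2 * a ^ 2) =
      (π * cosh ((π - θ) * a) / (a * sinh (π * a)) - 1 / a ^ 2) / 2 by ring]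
  exact (h.div_const 2).congr_fun fun n => by push_cast; ring
end

section
/- Let b : [0, π]² → ℝ be a positive semidefinite kernel with |b(φ₁, φ₂)| < 1 for all φ₁, φ₂. Then for every natural number p ≥ 1, the pointwise power kernel (φ₁, φ₂) ↦ (b(φ₁, φ₂))^p is positive semidefinite, and the kernel C((φ₁, θ₁), (φ₂, θ₂)) = (1 − b(φ₁,φ₂)²)/(1 − 2·b(φ₁,φ₂)·cos(θ₁ − θ₂) + b(φ₁,φ₂)²) is positive semidefinite on ([0, π] × ℝ)². -/
/-!
Gram matrices of `b` on finitely many points are positive semidefinite, so Schur's product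
theorem (`Matrix.PosSemidef.hadamard`) handles the powers `b ^ p`. For the Poisson kernel, expand
`C = ∑ εₙ bⁿ cos (n (θ₁ - θ₂))`; since `cos (x - y) = cos x cos y + sin x sin y` is a sum of two
rank-one kernels, every term is positive semidefinite by Schur again, and positive
semidefiniteness passes to pointwise limits because quadratic forms on finitely many points are
continuous in the kernel.
-/

open Real Finset

namespace Matrix

open scoped ComplexOrder in
theorem PosSemidef.of_hasSum {𝕜 n : Type*} [RCLike 𝕜] [Fintype n] {A : ℕ → Matrix n n 𝕜}
    {B : Matrix n n 𝕜} (hA : ∀ k, (A k).PosSemidef) (hB : HasSum A B) : B.PosSemidef := by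
  refine posSemidef_iff_dotProduct_mulVec.mpr ⟨?_, fun x => ?_⟩
  · refine hB.matrix_conjTranspose.unique ?_
    simpa only [(hA _).isHermitian.eq] using hB
  · let q : Matrix n n 𝕜 →+ 𝕜 :=
      AddMonoidHom.mk' (fun M => star x ⬝ᵥ (M *ᵥ x)) fun M N => by
        simp only [add_mulVec, dotProduct_add]
    have hq : Continuous q :=
      continuous_const.dotProduct (continuous_id.matrix_mulVec continuous_const)
    exact hasSum_le (fun k => (hA k).dotProduct_mulVec_nonneg x) hasSum_zero (hB.map q hq)

end Matrix

def IsPosSemidefKernelOn {α : Type*} (K : α → α → ℝ) (s : Set α) : Prop :=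
  ∀ ⦃l : ℕ⦄ (x : Fin l → α), (∀ i, x i ∈ s) → (Matrix.of fun i j => K (x i) (x j)).PosSemidef

namespace IsPosSemidefKernelOn

variable {α β : Type*} {K L : α → α → ℝ} {s : Set α}

theorem mul (hK : IsPosSemidefKernelOn K s) (hL : IsPosSemidefKernelOn L s) :
    IsPosSemidefKernelOn (fun x y => K x y * L x y) s :=
  fun _ x hx => (hK x hx).hadamard (hL x hx)

theorem one : IsPosSemidefKernelOn (fun _ _ : α => (1 : ℝ)) s := fun _ _ _ => by
  simpa [Matrix.vecMulVec, Matrix.of] using Matrix.posSemidef_vecMulVec_self_star (1 : Fin _ → ℝ)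

theorem pow (hK : IsPosSemidefKernelOn K s) (n : ℕ) :
    IsPosSemidefKernelOn (fun x y => K x y ^ n) s := by
  induction n with
  | zero => simpa only [pow_zero] using one
  | succ n ih => simpa only [pow_succ] using ih.mul hK

theorem const_mul (hK : IsPosSemidefKernelOn K s) {c : ℝ} (hc : 0 ≤ c) :
    IsPosSemidefKernelOn (fun x y => c * K x y) s :=
  fun _ x hx => (hK x hx).smul hc

theorem comp (hK : IsPosSemidefKernelOn K s) {f : β → α} {t : Set β} (hf : Set.MapsTo f t s) :
    IsPosSemidefKernelOn (fun x y => K (f x) (f y)) t :=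
  fun _ x hx => hK (f ∘ x) fun i => hf (hx i)

theorem of_hasSum {K : ℕ → α → α → ℝ} (hK : ∀ n, IsPosSemidefKernelOn (K n) s)
    (hL : ∀ x ∈ s, ∀ y ∈ s, HasSum (fun n => K n x y) (L x y)) : IsPosSemidefKernelOn L s :=
  fun _ x hx => Matrix.PosSemidef.of_hasSum (fun n => hK n x hx)
    (Pi.hasSum.mpr fun i => Pi.hasSum.mpr fun j => hL _ (hx i) _ (hx j))

theorem sum_range_nonneg (hK : IsPosSemidefKernelOn K s) (l : ℕ) (x : ℕ → α) (c : ℕ → ℝ)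
    (hx : ∀ i, x i ∈ s) :
    0 ≤ ∑ i ∈ range l, ∑ j ∈ range l, c i * c j * K (x i) (x j) := by
  have := (hK (fun i : Fin l => x i) fun i => hx i).dotProduct_mulVec_nonneg (fun i => c i)
  simp only [dotProduct, Matrix.mulVec, Matrix.of_apply, star_trivial, Finset.mul_sum] at this
  simpa only [Finset.sum_range, mul_comm, mul_left_comm] using this

theorem of_sum_range_nonneg (hsymm : ∀ x ∈ s, ∀ y ∈ s, K x y = K y x)
    (hK : ∀ (l : ℕ) (x : ℕ → α) (c : ℕ → ℝ), (∀ i, x i ∈ s) →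
      0 ≤ ∑ i ∈ range l, ∑ j ∈ range l, c i * c j * K (x i) (x j)) :
    IsPosSemidefKernelOn K s := by
  intro l x hx
  refine Matrix.posSemidef_iff_dotProduct_mulVec.mpr
    ⟨Matrix.IsHermitian.ext fun i j => hsymm _ (hx j) _ (hx i), fun c => ?_⟩
  cases l with
  | zero => simp
  | succ l =>
    -- `x` is extended periodically so that every value of the sequence stays in `s`
    have := hK (l + 1) (fun n => x ⟨n % (l + 1), Nat.mod_lt _ l.succ_pos⟩)
      (fun n => if h : n < l + 1 then c ⟨n, h⟩ else 0) fun _ => hx _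
    simp only [Finset.sum_range, Fin.is_lt, dite_true, Nat.mod_eq_of_lt, Fin.eta] at this
    simpa only [dotProduct, Matrix.mulVec, Matrix.of_apply, star_trivial, Finset.mul_sum,
      mul_comm, mul_left_comm] using this

end IsPosSemidefKernelOn

theorem isPosSemidefKernelOn_cos_sub : IsPosSemidefKernelOn (fun x y : ℝ => cos (x - y)) Set.univ :=
  fun _ x _ => by
    convert (Matrix.posSemidef_vecMulVec_self_star fun i => cos (x i)).add
      (Matrix.posSemidef_vecMulVec_self_star fun i => sin (x i)) using 1
    ext i j
    simp [Matrix.vecMulVec, cos_sub]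

theorem hasSum_pow_mul_cos {β : ℝ} (hβ : |β| < 1) (t : ℝ) :
    HasSum (fun n : ℕ => β ^ n * cos (n * t))
      ((1 - β * cos t) / (1 - 2 * β * cos t + β ^ 2)) := by
  set z : ℂ := β * Complex.exp (t * Complex.I)
  have hz : ‖z‖ < 1 := by simpa [z] using hβ
  have hzn (n : ℕ) : (z ^ n).re = β ^ n * cos (n * t) := by
    rw [mul_pow, ← Complex.exp_nat_mul, ← mul_assoc, ← Complex.ofReal_pow,
      ← Complex.ofReal_natCast, ← Complex.ofReal_mul, Complex.re_ofReal_mul,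
      Complex.exp_ofReal_mul_I_re]
  have hinv : ((1 - z)⁻¹).re = (1 - β * cos t) / (1 - 2 * β * cos t + β ^ 2) := by
    have hre : (1 - z).re = 1 - β * cos t := by simp [z, Complex.exp_ofReal_mul_I_re]
    have him : (1 - z).im = -(β * sin t) := by simp [z, Complex.exp_ofReal_mul_I_im]
    rw [Complex.inv_re, Complex.normSq_apply, hre, him]
    congr 1
    linear_combination β ^ 2 * sin_sq_add_cos_sq t
  simpa only [Complex.reCLM_apply, hzn, hinv] using
    (hasSum_geometric_of_norm_lt_one hz).mapL Complex.reCLM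

theorem hasSum_poissonKernel {β : ℝ} (hβ : |β| < 1) (t : ℝ) :
    HasSum (fun n : ℕ => (if n = 0 then 1 else 2) * (β ^ n * cos (n * t)))
      ((1 - β ^ 2) / (1 - 2 * β * cos t + β ^ 2)) := by
  have hβcos : β * cos t ≤ |β| := (le_abs_self _).trans <| by
    rw [abs_mul]; exact mul_le_of_le_one_right (abs_nonneg β) (abs_cos_le_one t)
  have hD : 1 - 2 * β * cos t + β ^ 2 ≠ 0 := by
    nlinarith [sq_abs β, pow_pos (sub_pos.2 hβ) 2]
  have hcoeff : (fun n : ℕ => (if n = 0 then 1 else 2) * (β ^ n * cos (n * t))) =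
      fun n : ℕ => 2 * (β ^ n * cos (n * t)) - if n = 0 then 1 else 0 := by
    funext n
    rcases eq_or_ne n 0 with rfl | hn
    · norm_num
    · simp [hn]
  have hsum : (1 - β ^ 2) / (1 - 2 * β * cos t + β ^ 2) =
      2 * ((1 - β * cos t) / (1 - 2 * β * cos t + β ^ 2)) - 1 := by
    rw [mul_div_assoc', eq_sub_iff_add_eq, div_add_one hD]
    ring
  rw [hcoeff, hsum]
  exact ((hasSum_pow_mul_cos hβ t).mul_left 2).sub (hasSum_ite_eq 0 1)

theorem IsPosSemidefKernelOn.poissonKernel {α : Type*} {b : α → α → ℝ} {s : Set α}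
    (hb : IsPosSemidefKernelOn b s) (hlt : ∀ x ∈ s, ∀ y ∈ s, |b x y| < 1) :
    IsPosSemidefKernelOn (fun p q : α × ℝ => (1 - b p.1 q.1 ^ 2) /
      (1 - 2 * b p.1 q.1 * cos (p.2 - q.2) + b p.1 q.1 ^ 2)) (s ×ˢ Set.univ) := by
  refine .of_hasSum (fun n => ?_) fun p hp q hq => hasSum_poissonKernel (hlt _ hp.1 _ hq.1) _
  have hcos := isPosSemidefKernelOn_cos_sub.comp
    (Set.mapsTo_univ (fun p : α × ℝ => (n : ℝ) * p.2) (s ×ˢ Set.univ))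
  have hε : (0 : ℝ) ≤ if n = 0 then 1 else 2 := by split_ifs <;> norm_num
  simpa only [mul_sub] using
    (((hb.pow n).comp (f := Prod.fst) fun p hp => hp.1).mul hcos).const_mul hε

theorem stmt_11 (b : ℝ → ℝ → ℝ)
    (hsymm : ∀ φ₁ ∈ Set.Icc (0:ℝ) π, ∀ φ₂ ∈ Set.Icc (0:ℝ) π, b φ₁ φ₂ = b φ₂ φ₁)
    (hpsd : ∀ l : ℕ, ∀ φ c : ℕ → ℝ, (∀ i, φ i ∈ Set.Icc (0:ℝ) π) →
      0 ≤ ∑ i ∈ Finset.range l, ∑ j ∈ Finset.range l, c i * c j * b (φ i) (φ j))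
    (hlt : ∀ φ₁ ∈ Set.Icc (0:ℝ) π, ∀ φ₂ ∈ Set.Icc (0:ℝ) π, |b φ₁ φ₂| < 1) :
    (∀ p : ℕ, 1 ≤ p → ∀ l : ℕ, ∀ φ c : ℕ → ℝ, (∀ i, φ i ∈ Set.Icc (0:ℝ) π) →
      0 ≤ ∑ i ∈ Finset.range l, ∑ j ∈ Finset.range l, c i * c j * (b (φ i) (φ j)) ^ p) ∧
    (∀ l : ℕ, ∀ φ θ a : ℕ → ℝ, (∀ i, φ i ∈ Set.Icc (0:ℝ) π) →
      0 ≤ ∑ i ∈ Finset.range l, ∑ j ∈ Finset.range l,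
        a i * a j * ((1 - (b (φ i) (φ j)) ^ 2) /
          (1 - 2 * b (φ i) (φ j) * Real.cos (θ i - θ j) + (b (φ i) (φ j)) ^ 2))) := by
  have hb : IsPosSemidefKernelOn b (Set.Icc 0 π) :=
    IsPosSemidefKernelOn.of_sum_range_nonneg hsymm hpsd
  refine ⟨fun p _ l φ c hφ => (hb.pow p).sum_range_nonneg l φ c hφ, fun l φ θ a hφ => ?_⟩
  exact (hb.poissonKernel hlt).sum_range_nonneg l (fun i => (φ i, θ i)) a fun i => ⟨hφ i, trivial⟩
end

section
/- Let b : [0, π]² → ℝ be a positive semidefinite kernel with 0 ≤ b(φ₁, φ₂) < 1 for all φ₁, φ₂ and b(φ,φ) < 1. Then the kernel C((φ₁, θ₁), (φ₂, θ₂)) = −log(1 − 2·b(φ₁, φ₂)·cos(θ₁ − θ₂) + b(φ₁, φ₂)²) on ([0, π] × ℝ)² is positive semidefinite. -/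
/-!
With `z = r e^{it}`, the real part of the Taylor series of `-log (1 - z)` reads
`-log (1 - 2 r cos t + r²) = ∑ₙ (2 / n) rⁿ cos (n t)`. At `r = b(φᵢ, φⱼ)`, `t = θᵢ - θⱼ`,
the `n`-th term is the Hadamard product of the entrywise power `bⁿ`, positive semidefinite
by the Schur product theorem, with the matrix
`cos (n θᵢ - n θⱼ) = cos (n θᵢ) cos (n θⱼ) + sin (n θᵢ) sin (n θⱼ)`, a sum of two rank-one
positive semidefinite matrices. Positive semidefinite matrices form a closed cone, so the
sum of the series is positive semidefinite too.
-/

open Real Finset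

theorem Real.hasSum_pow_mul_cos_div {r : ℝ} (hr : |r| < 1) (t : ℝ) :
    HasSum (fun n : ℕ => r ^ n * cos (n * t) / n) (-log (1 - 2 * r * cos t + r ^ 2) / 2) := by
  set z : ℂ := r * Complex.exp (t * Complex.I)
  have hz : ‖z‖ = |r| := by simp [z]
  have hsq : ‖1 - z‖ ^ 2 = 1 - 2 * r * cos t + r ^ 2 := by
    rw [← Complex.normSq_eq_norm_sq, Complex.normSq_apply]
    simp [z, Complex.exp_ofReal_mul_I_re, Complex.exp_ofReal_mul_I_im]
    linear_combination r ^ 2 * sin_sq_add_cos_sq t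
  convert Complex.hasSum_re (Complex.hasSum_taylorSeries_neg_log (hz ▸ hr)) using 1
  · funext n
    have hzn : z ^ n = (r ^ n : ℝ) * Complex.exp ((n * t : ℝ) * Complex.I) := by
      rw [mul_pow, ← Complex.exp_nat_mul]
      push_cast
      ring_nf
    rw [hzn, ← Complex.ofReal_natCast, Complex.div_ofReal_re, Complex.re_ofReal_mul,
      Complex.exp_ofReal_mul_I_re]
  · rw [Complex.neg_re, Complex.log_re, ← hsq, log_pow]
    push_cast
    ring

namespace Matrix

open scoped ComplexOrder

section PosSemidef

variable {ι 𝕜 : Type*} [Fintype ι] [RCLike 𝕜]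

theorem PosSemidef.map_pow {A : Matrix ι ι 𝕜} (hA : A.PosSemidef) (n : ℕ) :
    (A.map (· ^ n)).PosSemidef := by
  induction n with
  | zero =>
    convert posSemidef_vecMulVec_self_star (fun _ : ι => (1 : 𝕜)) using 1
    ext i j
    simp [vecMulVec]
  | succ n ih =>
    convert ih.hadamard hA using 1
    ext i j
    simp [pow_succ]

theorem posSemidef_cos_sub (t : ι → ℝ) : (of fun i j => cos (t i - t j)).PosSemidef := by
  convert (posSemidef_vecMulVec_self_star (cos ∘ t)).add
    (posSemidef_vecMulVec_self_star (sin ∘ t)) using 1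
  ext i j
  simp [vecMulVec, cos_sub]

theorem isClosed_setOf_posSemidef : IsClosed {A : Matrix ι ι 𝕜 | A.PosSemidef} := by
  simp only [posSemidef_iff_dotProduct_mulVec, Set.ofPred_and, Set.ofPred_forall]
  refine .inter (isClosed_eq (by fun_prop) continuous_id) (isClosed_iInter fun x => ?_)
  exact isClosed_le continuous_const
    (continuous_const.dotProduct (continuous_id.matrix_mulVec continuous_const))

theorem PosSemidef.of_hasSum_s12 {A : ℕ → Matrix ι ι 𝕜} {S : Matrix ι ι 𝕜}
    (hS : HasSum A S) (hA : ∀ n, (A n).PosSemidef) : S.PosSemidef :=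
  isClosed_setOf_posSemidef.mem_of_tendsto hS.tendsto_sum_nat
    (.of_forall fun _ => posSemidef_sum _ fun n _ => hA n)

end PosSemidef

theorem PosSemidef.neg_log_one_sub_two_mul_cos_add_sq {ι : Type*} [Fintype ι]
    {B : Matrix ι ι ℝ} (hB : B.PosSemidef) (hB1 : ∀ i j, |B i j| < 1) (θ : ι → ℝ) :
    (of fun i j => -log (1 - 2 * B i j * cos (θ i - θ j) + B i j ^ 2)).PosSemidef := by
  let term (n : ℕ) : Matrix ι ι ℝ :=
    (2 / n : ℝ) • (B.map (· ^ n) ⊙ of fun i j => cos (n * θ i - n * θ j))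
  have hterm (n : ℕ) : (term n).PosSemidef :=
    ((hB.map_pow n).hadamard (posSemidef_cos_sub _)).smul (by positivity)
  refine PosSemidef.of_hasSum_s12 (A := term) ?_ hterm
  refine Pi.hasSum.2 fun i => Pi.hasSum.2 fun j => ?_
  have hentry :
      (fun n => term n i j) = fun n : ℕ => 2 * (B i j ^ n * cos (n * (θ i - θ j)) / n) :=
    funext fun n => by
      simp only [term, smul_apply, hadamard_apply, map_apply, of_apply, smul_eq_mul, mul_sub]
      ring
  simpa [hentry, mul_div_cancel₀ _ (two_ne_zero (α := ℝ))] using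
    (hasSum_pow_mul_cos_div (hB1 i j) (θ i - θ j)).mul_left 2

theorem sum_range_sum_range_mul_eq_dotProduct_mulVec (l : ℕ) (K : ℕ → ℕ → ℝ) (c : ℕ → ℝ) :
    ∑ i ∈ range l, ∑ j ∈ range l, c i * c j * K i j =
      (fun i : Fin l => c i) ⬝ᵥ (of fun i j : Fin l => K i j) *ᵥ fun i => c i := by
  simp only [Finset.sum_range, dotProduct, mulVec, of_apply, mul_sum]
  refine sum_congr rfl fun i _ => sum_congr rfl fun j _ => ?_
  ring

theorem posSemidef_of_forall_sum_range_nonneg {l : ℕ} {K : ℕ → ℕ → ℝ}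
    (hsymm : ∀ i j, K i j = K j i)
    (hK : ∀ c : ℕ → ℝ, 0 ≤ ∑ i ∈ range l, ∑ j ∈ range l, c i * c j * K i j) :
    (of fun i j : Fin l => K i j).PosSemidef := by
  refine posSemidef_iff_dotProduct_mulVec.2 ⟨?_, fun x => ?_⟩
  · ext i j
    exact hsymm j i
  · have hx := hK fun i => if h : i < l then x ⟨i, h⟩ else 0
    rw [sum_range_sum_range_mul_eq_dotProduct_mulVec] at hx
    simpa using hx

theorem PosSemidef.sum_range_nonneg {l : ℕ} {K : ℕ → ℕ → ℝ}
    (hK : (of fun i j : Fin l => K i j).PosSemidef) (c : ℕ → ℝ) :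
    0 ≤ ∑ i ∈ range l, ∑ j ∈ range l, c i * c j * K i j := by
  simpa [sum_range_sum_range_mul_eq_dotProduct_mulVec] using hK.dotProduct_mulVec_nonneg _

end Matrix

theorem stmt_12 (b : ℝ → ℝ → ℝ)
    (hsymm : ∀ φ₁ ∈ Set.Icc (0:ℝ) π, ∀ φ₂ ∈ Set.Icc (0:ℝ) π, b φ₁ φ₂ = b φ₂ φ₁)
    (hpsd : ∀ l : ℕ, ∀ φ c : ℕ → ℝ, (∀ i, φ i ∈ Set.Icc (0:ℝ) π) →
      0 ≤ ∑ i ∈ Finset.range l, ∑ j ∈ Finset.range l, c i * c j * b (φ i) (φ j))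
    (hnonneg : ∀ φ₁ ∈ Set.Icc (0:ℝ) π, ∀ φ₂ ∈ Set.Icc (0:ℝ) π, 0 ≤ b φ₁ φ₂)
    (hlt : ∀ φ₁ ∈ Set.Icc (0:ℝ) π, ∀ φ₂ ∈ Set.Icc (0:ℝ) π, b φ₁ φ₂ < 1) :
    ∀ l : ℕ, ∀ φ θ a : ℕ → ℝ, (∀ i, φ i ∈ Set.Icc (0:ℝ) π) →
      0 ≤ ∑ i ∈ Finset.range l, ∑ j ∈ Finset.range l,
        a i * a j * (-Real.log (1 - 2 * b (φ i) (φ j) * Real.cos (θ i - θ j)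
          + (b (φ i) (φ j)) ^ 2)) := by
  intro l φ θ a hφ
  have hB : (Matrix.of fun i j : Fin l => b (φ i) (φ j)).PosSemidef :=
    Matrix.posSemidef_of_forall_sum_range_nonneg (fun i j => hsymm _ (hφ i) _ (hφ j))
      (hpsd l φ · hφ)
  have hB1 (i j : Fin l) : |b (φ i) (φ j)| < 1 :=
    abs_lt.2 ⟨by linarith [hnonneg _ (hφ i) _ (hφ j)], hlt _ (hφ i) _ (hφ j)⟩
  exact (hB.neg_log_one_sub_two_mul_cos_add_sq hB1 fun i => θ i).sum_range_nonneg
    (K := fun i j => -log (1 - 2 * b (φ i) (φ j) * cos (θ i - θ j) + b (φ i) (φ j) ^ 2)) a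
end

section
/- Let m, l ∈ ℕ, and for each natural number n let B_n and A_n be functions from [0, π] × [0, π] × ℝ to m × m real matrices. Suppose that for every n, every choice of φ₁,…,φ_l ∈ [0, π], t₁,…,t_l ∈ ℝ, and vectors u₁,…,u_l, v₁,…,v_l ∈ ℝ^m, ∑_{i,j} ( uᵢᵀ B_n(φ_i, φ_j, t_i − t_j) u_j + vᵢᵀ B_n(φ_i, φ_j, t_i − t_j) v_j + uᵢᵀ A_n(φ_i, φ_j, t_i − t_j) v_j − vᵢᵀ A_n(φ_i, φ_j, t_i − t_j) u_j ) ≥ 0. Then for every N ∈ ℕ, all θ₁,…,θ_l ∈ ℝ, all t₁,…,t_l ∈ ℝ, all φ₁,…,φ_l ∈ [0, π], and all w₁,…,w_l ∈ ℝ^m, ∑_{i,j} wᵢᵀ [ ∑_{n=0}^N ( B_n(φ_i, φ_j, t_i − t_j)·cos(n(θ_i − θ_j)) + A_n(φ_i, φ_j, t_i − t_j)·sin(n(θ_i − θ_j)) ) ] w_j ≥ 0. -/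
/-!
For each fixed `n`, put `uᵢ = cos (n θᵢ) • wᵢ` and `vᵢ = - sin (n θᵢ) • wᵢ`. By the addition
formulas for `cos (n θᵢ - n θⱼ)` and `sin (n θᵢ - n θⱼ)`, the `n`-th summand of the quadratic form
is exactly the hypothesis evaluated at `u, v`, hence nonnegative; summing over `n` concludes.
-/

open Real Finset Matrix

lemma dotProduct_cos_sub_smul_add_sin_sub_smul_mulVec {p q : Type*} [Fintype p] [Fintype q]
    (B A : Matrix p q ℝ) (x : p → ℝ) (y : q → ℝ) (a b : ℝ) :
    x ⬝ᵥ ((cos (a - b) • B + sin (a - b) • A) *ᵥ y)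
      = (cos a • x) ⬝ᵥ (B *ᵥ (cos b • y)) + (-sin a • x) ⬝ᵥ (B *ᵥ (-sin b • y))
        + (cos a • x) ⬝ᵥ (A *ᵥ (-sin b • y)) - (-sin a • x) ⬝ᵥ (A *ᵥ (cos b • y)) := by
  simp only [add_mulVec, smul_mulVec, mulVec_smul, dotProduct_add, dotProduct_smul,
    smul_dotProduct, smul_eq_mul, cos_sub, sin_sub]
  ring

lemma sum_sum_dotProduct_sum_mulVec {ι κ n : Type*} [Fintype n] (s : Finset ι) (t : Finset κ)
    (w : ι → n → ℝ) (M : κ → ι → ι → Matrix n n ℝ) :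
    ∑ i ∈ s, ∑ j ∈ s, w i ⬝ᵥ ((∑ k ∈ t, M k i j) *ᵥ w j)
      = ∑ k ∈ t, ∑ i ∈ s, ∑ j ∈ s, w i ⬝ᵥ (M k i j *ᵥ w j) := by
  simp only [sum_mulVec, dotProduct_sum]
  exact (sum_congr rfl fun _ _ => sum_comm).trans sum_comm

theorem stmt_14 (m l : ℕ)
    (B A : ℕ → ℝ → ℝ → ℝ → Matrix (Fin m) (Fin m) ℝ)
    (hyp : ∀ n : ℕ, ∀ φ t : ℕ → ℝ, ∀ u v : ℕ → (Fin m → ℝ),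
      (∀ i, φ i ∈ Set.Icc (0:ℝ) π) →
      0 ≤ ∑ i ∈ Finset.range l, ∑ j ∈ Finset.range l,
        (u i ⬝ᵥ (B n (φ i) (φ j) (t i - t j) *ᵥ u j)
          + v i ⬝ᵥ (B n (φ i) (φ j) (t i - t j) *ᵥ v j)
          + u i ⬝ᵥ (A n (φ i) (φ j) (t i - t j) *ᵥ v j)
          - v i ⬝ᵥ (A n (φ i) (φ j) (t i - t j) *ᵥ u j))) :
    ∀ N : ℕ, ∀ θ t φ : ℕ → ℝ, ∀ w : ℕ → (Fin m → ℝ),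
      (∀ i, φ i ∈ Set.Icc (0:ℝ) π) →
      0 ≤ ∑ i ∈ Finset.range l, ∑ j ∈ Finset.range l,
        w i ⬝ᵥ ((∑ n ∈ Finset.range (N + 1),
          (Real.cos (n * (θ i - θ j)) • B n (φ i) (φ j) (t i - t j)
            + Real.sin (n * (θ i - θ j)) • A n (φ i) (φ j) (t i - t j))) *ᵥ w j) := by
  intro N θ t φ w hφ
  rw [sum_sum_dotProduct_sum_mulVec]
  refine sum_nonneg fun n _ => ?_
  refine (hyp n φ t (fun i => cos (n * θ i) • w i) (fun i => -sin (n * θ i) • w i) hφ).trans_eq ?_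
  refine sum_congr rfl fun i _ => sum_congr rfl fun j _ => ?_
  rw [mul_sub, dotProduct_cos_sub_smul_add_sin_sub_smul_mulVec]
end
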